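/- Let α, β and α₁, β₁ be two pairs of nonzero complex numbers with |α|² + |β|² = 1 = |α₁|² + |β₁|², and suppose U is a unitary operator on H satisfying U T_{α,β} = T_{α₁,β₁} U. Then U is diagonal with at most two distinct diagonal entries: there exist complex numbers t₁, t with |t₁| = |t| = 1 such that U e_0 = t₁ e_0 and U e_n = t e_n for all n ≥ 1. -/

import Mathlib

open scoped ComplexConjugate

noncomputable section

/-- The Hilbert space `H = ℓ²(ℕ, ℂ)`. -/
abbrev H : Type := lp (fun _ : ℕ => ℂ) 2

/-- The standard orthonormal basis vectors of `ℓ²(ℕ, ℂ)`. -/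
noncomputable def e (n : ℕ) : H := lp.single 2 n (1 : ℂ)

/-! `T_{α,β}* T_{α,β} = 1 - |α|⁴ ⟨e 0, ·⟩ e 0`, so (for `α ≠ 0`) `T_{α,β}` preserves the norm
of a vector exactly when its `0`-th coordinate vanishes. Since `T` maps each `e n`, `n ≥ 1`,
isometrically, `T₁` preserves the norm of `U (e n)`; hence `U (e n) ⊥ e 0` for `n ≥ 1`, and by
unitarity `U (e 0) = t₁ • e 0`. Applying `U T = T₁ U` to `e 0` forces `U (e 1) = t • e 1`, and
since both operators shift `e n ↦ e (n + 1)` for `n ≥ 1`, the same `t` works for all `n ≥ 1`. -/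

open scoped InnerProductSpace
open ContinuousLinearMap

@[simp]
lemma e_apply (n m : ℕ) : e n m = if m = n then 1 else 0 := by
  simp [e, lp.single_apply, Pi.single_apply]

@[simp]
lemma inner_e_left (n : ℕ) (z : H) : ⟪e n, z⟫_ℂ = z n := by
  simp [e, lp.inner_single_left]

@[simp]
lemma norm_e (n : ℕ) : ‖e n‖ = 1 := by
  simp [e, lp.norm_single (p := 2) (by norm_num)]

lemma eq_smul_e_of_apply_eq_zero {z : H} {k : ℕ} (h : ∀ n ≠ k, z n = 0) : z = z k • e k := by
  ext n
  by_cases hn : n = k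
  · simp [hn]
  · simp [hn, h n hn]

lemma norm_eq_one_of_apply_e_eq_smul (U : H →ₗᵢ[ℂ] H) {n : ℕ} {t : ℂ} (h : U (e n) = t • e n) :
    ‖t‖ = 1 := by
  simpa [norm_smul] using (congrArg norm h).symm

lemma LinearIsometryEquiv.exists_apply_e_eq_smul (U : H ≃ₗᵢ[ℂ] H) {k : ℕ}
    (h : ∀ n ≠ k, U (e n) k = 0) : ∃ t : ℂ, U (e k) = t • e k := by
  set v := U.symm (e k)
  have hv : v = v k • e k := eq_smul_e_of_apply_eq_zero fun n hn => by
    rw [← inner_e_left, ← U.inner_map_map, U.apply_symm_apply, ← inner_conj_symm, inner_e_left,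
      h n hn, (starRingEnd ℂ).map_zero]
  have hUv : e k = v k • U (e k) := by
    rw [← map_smul, ← hv]
    exact (U.apply_symm_apply _).symm
  have hvk : v k ≠ 0 := by
    rintro h0
    simpa [h0] using congrArg norm hUv
  exact ⟨(v k)⁻¹, (eq_inv_smul_iff₀ hvk).mpr hUv.symm⟩

lemma adjoint_apply_eq_of_inner {A : H →L[ℂ] H} {w v : H} (h : ∀ n, ⟪A (e n), w⟫_ℂ = v n) :
    adjoint A w = v := by
  ext n
  rw [← inner_e_left, adjoint_inner_right, h]

/-- `T` is `T_{α,β}`: the two fields pin it down on the basis `e`. -/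
structure IsCompressedShift (α β : ℂ) (T : H →L[ℂ] H) : Prop where
  apply_e_zero : T (e 0) = (α * conj β) • e 0 + β • e 1
  apply_e_of_one_le : ∀ n, 1 ≤ n → T (e n) = e (n + 1)

namespace IsCompressedShift

variable {α β : ℂ} {T : H →L[ℂ] H} (hT : IsCompressedShift α β T)
include hT

lemma adjoint_e_zero : adjoint T (e 0) = (conj α * β) • e 0 := by
  refine adjoint_apply_eq_of_inner fun n => ?_
  rcases n with _ | n
  · simp [hT.apply_e_zero]
  · simp [hT.apply_e_of_one_le (n + 1) (by omega)]

lemma adjoint_e_one : adjoint T (e 1) = conj β • e 0 := by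
  refine adjoint_apply_eq_of_inner fun n => ?_
  rcases n with _ | n
  · simp [hT.apply_e_zero]
  · simp [hT.apply_e_of_one_le (n + 1) (by omega)]

lemma adjoint_e_succ {m : ℕ} (hm : 1 ≤ m) : adjoint T (e (m + 1)) = e m := by
  refine adjoint_apply_eq_of_inner fun n => ?_
  have hm0 : m ≠ 0 := by omega
  rcases n with _ | n
  · simp [hT.apply_e_zero, hm0, hm0.symm]
  · simp [hT.apply_e_of_one_le (n + 1) (by omega)]

lemma apply_apply_zero (z : H) : T z 0 = α * conj β * z 0 := by
  rw [← inner_e_left, ← adjoint_inner_left, hT.adjoint_e_zero, inner_smul_left, inner_e_left]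
  simp

lemma apply_apply_one (z : H) : T z 1 = β * z 0 := by
  rw [← inner_e_left, ← adjoint_inner_left, hT.adjoint_e_one, inner_smul_left, inner_e_left]
  simp

lemma apply_apply_succ (z : H) {m : ℕ} (hm : 1 ≤ m) : T z (m + 1) = z m := by
  rw [← inner_e_left, ← adjoint_inner_left, hT.adjoint_e_succ hm, inner_e_left]

lemma adjoint_apply_apply (hnorm : ‖α‖ ^ 2 + ‖β‖ ^ 2 = 1) (z : H) :
    adjoint T (T z) = z - (‖α‖ ^ 4 * z 0 : ℂ) • e 0 := by
  refine adjoint_apply_eq_of_inner fun n => ?_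
  rcases n with _ | n
  · have hα : conj α * α = ‖α‖ ^ 2 := Complex.conj_mul' α
    have hβ : conj β * β = 1 - ‖α‖ ^ 2 := by
      rw [Complex.conj_mul']; exact_mod_cast eq_sub_of_add_eq' hnorm
    simp only [hT.apply_e_zero, inner_add_left, inner_smul_left, inner_e_left,
      hT.apply_apply_zero, hT.apply_apply_one, lp.coeFn_sub, lp.coeFn_smul, Pi.sub_apply,
      Pi.smul_apply, e_apply, map_mul, Complex.conj_conj]
    rw [smul_eq_mul, if_pos trivial]
    linear_combination (z 0 * (conj β * β)) * hα + (z 0 * (‖α‖ ^ 2 + 1)) * hβ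
  · simp only [lp.coeFn_sub, lp.coeFn_smul, Pi.sub_apply, Pi.smul_apply]
    simp [hT.apply_e_of_one_le (n + 1) (by omega), hT.apply_apply_succ z (m := n + 1) (by omega)]

lemma norm_apply_sq (hnorm : ‖α‖ ^ 2 + ‖β‖ ^ 2 = 1) (z : H) :
    ‖T z‖ ^ 2 = ‖z‖ ^ 2 - ‖α‖ ^ 4 * ‖z 0‖ ^ 2 := by
  have h := adjoint_inner_left T z (T z)
  rw [hT.adjoint_apply_apply hnorm, inner_sub_left, inner_smul_left, inner_e_left,
    inner_self_eq_norm_sq_to_K, inner_self_eq_norm_sq_to_K, map_mul, map_pow, Complex.conj_ofReal,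
    mul_assoc, Complex.conj_mul'] at h
  exact Complex.ofReal_injective (by push_cast; exact h.symm)

lemma apply_zero_eq_zero_of_norm_apply_eq (hα : α ≠ 0) (hnorm : ‖α‖ ^ 2 + ‖β‖ ^ 2 = 1) {z : H}
    (h : ‖T z‖ = ‖z‖) : z 0 = 0 := by
  have hsq := hT.norm_apply_sq hnorm z
  rw [h, eq_comm, sub_eq_self, mul_eq_zero] at hsq
  simpa [hα] using hsq

end IsCompressedShift

theorem intertwining_unitary_diagonal_general (α β α₁ β₁ : ℂ)
    (hβ : β ≠ 0) (hα₁ : α₁ ≠ 0)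
    (hnorm₁ : ‖α₁‖ ^ 2 + ‖β₁‖ ^ 2 = 1)
    (T T₁ : H →L[ℂ] H)
    (hT0 : T (e 0) = (α * conj β) • e 0 + β • e 1)
    (hTn : ∀ n : ℕ, 1 ≤ n → T (e n) = e (n + 1))
    (hT₁0 : T₁ (e 0) = (α₁ * conj β₁) • e 0 + β₁ • e 1)
    (hT₁n : ∀ n : ℕ, 1 ≤ n → T₁ (e n) = e (n + 1))
    (U : H ≃ₗᵢ[ℂ] H) (hU : ∀ x : H, U (T x) = T₁ (U x)) :
    ∃ t₁ t : ℂ, ‖t₁‖ = 1 ∧ ‖t‖ = 1 ∧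
      U (e 0) = t₁ • e 0 ∧ ∀ n : ℕ, 1 ≤ n → U (e n) = t • e n := by
  have hT₁ : IsCompressedShift α₁ β₁ T₁ := ⟨hT₁0, hT₁n⟩
  -- `T₁` is isometric on `U (e n)`, since `T` is on `e n`
  have hU_zero : ∀ n, 1 ≤ n → U (e n) 0 = 0 := fun n hn =>
    hT₁.apply_zero_eq_zero_of_norm_apply_eq hα₁ hnorm₁ (by
      rw [← hU, U.norm_map, U.norm_map, hTn n hn, norm_e, norm_e])
  obtain ⟨t₁, hU0⟩ := U.exists_apply_e_eq_smul fun n hn =>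
    hU_zero n (Nat.one_le_iff_ne_zero.mpr hn)
  -- the coordinates `≥ 2` of `U (T (e 0)) = T₁ (t₁ • e 0)` give `β * U (e 1) (n + 2) = 0`
  have hU1 : U (e 1) = U (e 1) 1 • e 1 := by
    refine eq_smul_e_of_apply_eq_zero fun n hn => ?_
    rcases n with _ | _ | n
    · exact hU_zero 1 le_rfl
    · exact (hn rfl).elim
    · have h := congrArg (fun z : H => z (n + 2)) (hU (e 0))
      simp only [hT0, map_add, map_smul, hU0, hT₁.apply_apply_succ _ (m := n + 1) (by omega),
        lp.coeFn_add, lp.coeFn_smul, Pi.add_apply, Pi.smul_apply] at h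
      simpa [hβ] using h
  refine ⟨t₁, U (e 1) 1, norm_eq_one_of_apply_e_eq_smul U.toLinearIsometry hU0,
    norm_eq_one_of_apply_e_eq_smul U.toLinearIsometry hU1, hU0, fun n hn => ?_⟩
  induction n, hn using Nat.le_induction with
  | base => exact hU1
  | succ m hm ih => rw [← hTn m hm, hU, ih, map_smul, hT₁n m hm, hTn m hm]

/-- Any unitary intertwining `T_{α,β}` and `T_{α₁,β₁}` is diagonal with at most two
distinct diagonal entries. -/
theorem intertwining_unitary_diagonal (α β α₁ β₁ : ℂ)
    (hα : α ≠ 0) (hβ : β ≠ 0) (hα₁ : α₁ ≠ 0) (hβ₁ : β₁ ≠ 0)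
    (hnorm : ‖α‖ ^ 2 + ‖β‖ ^ 2 = 1)
    (hnorm₁ : ‖α₁‖ ^ 2 + ‖β₁‖ ^ 2 = 1)
    (T T₁ : H →L[ℂ] H)
    (hT0 : T (e 0) = (α * conj β) • e 0 + β • e 1)
    (hTn : ∀ n : ℕ, 1 ≤ n → T (e n) = e (n + 1))
    (hT₁0 : T₁ (e 0) = (α₁ * conj β₁) • e 0 + β₁ • e 1)
    (hT₁n : ∀ n : ℕ, 1 ≤ n → T₁ (e n) = e (n + 1))
    (U : H ≃ₗᵢ[ℂ] H) (hU : ∀ x : H, U (T x) = T₁ (U x)) :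
    ∃ t₁ t : ℂ, ‖t₁‖ = 1 ∧ ‖t‖ = 1 ∧
      U (e 0) = t₁ • e 0 ∧ ∀ n : ℕ, 1 ≤ n → U (e n) = t • e n :=
  intertwining_unitary_diagonal_general α β α₁ β₁ hβ hα₁ hnorm₁ T T₁ hT0 hTn hT₁0 hT₁n U hU

end
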